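/- Let (A, C)_ψ be an entwining structure over a commutative ring K: an algebra A, a coalgebra C, and a K-linear map ψ : C ⊗ A → A ⊗ C satisfying the entwining axioms. Then the A-bimodule 𝒞 = A ⊗_K C with left action a''·(a' ⊗ c) = a''a' ⊗ c, right action (a' ⊗ c)·a = a'·ψ(c ⊗ a), comultiplication A ⊗ Δ_C, and counit A ⊗ ε_C, is an A-coring: the comultiplication and counit are A-bilinear, coassociative, and counital. -/

import Mathlib

/-!
Statement 18.  Let `(A, C)_ψ` be an entwining structure over a commutative ring `K`:
an algebra `A`, a coalgebra `C`, and a `K`-linear map `ψ : C ⊗ A → A ⊗ C` satisfying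
the entwining axioms.  Then the `A`-bimodule `𝒞 = A ⊗_K C`, with left action
`a''·(a' ⊗ c) = a''a' ⊗ c`, right action `(a' ⊗ c)·a = a'·ψ(c ⊗ a)`,
comultiplication `A ⊗ Δ_C` and counit `A ⊗ ε_C`, is an `A`-coring: the
comultiplication and counit are `A`-bilinear, coassociative and counital.
(The canonical identification `𝒞 ⊗_A 𝒞 ≅ A ⊗ C ⊗ C` is used throughout, so that the
coring axioms are expressed on `A ⊗ C ⊗ C`.)
-/

universe u

open TensorProduct LinearMap

variable (K : Type u) [CommRing K] (A : Type u) [Ring A] [Algebra K A]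
  (C : Type u) [AddCommGroup C] [Module K C] [Coalgebra K C]
  (ψ : C ⊗[K] A →ₗ[K] A ⊗[K] C)

/-- The four axioms of an entwining structure `(A, C)_ψ`. -/
def IsEntwining : Prop :=
  -- `ψ ∘ (C ⊗ μ) = (μ ⊗ C) ∘ (A ⊗ ψ) ∘ (ψ ⊗ A)`
  (ψ ∘ₗ lTensor C (mul' K A) =
    rTensor C (mul' K A) ∘ₗ (TensorProduct.assoc K A A C).symm.toLinearMap ∘ₗ
      lTensor A ψ ∘ₗ (TensorProduct.assoc K A C A).toLinearMap ∘ₗ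
        rTensor A ψ ∘ₗ (TensorProduct.assoc K C A A).symm.toLinearMap) ∧
  -- `(A ⊗ Δ) ∘ ψ = (ψ ⊗ C) ∘ (C ⊗ ψ) ∘ (Δ ⊗ A)`
  (lTensor A Coalgebra.comul ∘ₗ ψ =
    (TensorProduct.assoc K A C C).toLinearMap ∘ₗ rTensor C ψ ∘ₗ
      (TensorProduct.assoc K C A C).symm.toLinearMap ∘ₗ lTensor C ψ ∘ₗ
        (TensorProduct.assoc K C C A).toLinearMap ∘ₗ rTensor A Coalgebra.comul) ∧
  -- `ψ (c ⊗ 1) = 1 ⊗ c`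
  (∀ c : C, ψ (c ⊗ₜ (1 : A)) = (1 : A) ⊗ₜ c) ∧
  -- `(A ⊗ ε) ∘ ψ = ε ⊗ A`
  ((TensorProduct.rid K A).toLinearMap ∘ₗ lTensor A Coalgebra.counit ∘ₗ ψ =
    (TensorProduct.lid K A).toLinearMap ∘ₗ rTensor A Coalgebra.counit)

/-- The right `A`-action on `𝒞 = A ⊗ C` induced by `ψ` : `(a' ⊗ c)·a = a'·ψ(c ⊗ a)`. -/
noncomputable def entRAct : ((A ⊗[K] C) ⊗[K] A) →ₗ[K] A ⊗[K] C :=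
  rTensor C (mul' K A) ∘ₗ (TensorProduct.assoc K A A C).symm.toLinearMap ∘ₗ
    lTensor A ψ ∘ₗ (TensorProduct.assoc K A C A).toLinearMap

/-- The left `A`-action on `𝒞 = A ⊗ C` : `a''·(a' ⊗ c) = a''a' ⊗ c`. -/
noncomputable def entLAct (a : A) : (A ⊗[K] C) →ₗ[K] A ⊗[K] C :=
  rTensor C (LinearMap.mulLeft K a)

/-- The comultiplication `A ⊗ Δ_C : 𝒞 → 𝒞 ⊗_A 𝒞 ≅ (A ⊗ C) ⊗ C`. -/
noncomputable def entComul : (A ⊗[K] C) →ₗ[K] (A ⊗[K] C) ⊗[K] C :=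
  (TensorProduct.assoc K A C C).symm.toLinearMap ∘ₗ lTensor A Coalgebra.comul

/-- The counit `A ⊗ ε_C : 𝒞 → A`. -/
noncomputable def entCounit : (A ⊗[K] C) →ₗ[K] A :=
  (TensorProduct.rid K A).toLinearMap ∘ₗ lTensor A Coalgebra.counit

/-- The right `A`-action on `𝒞 ⊗_A 𝒞 ≅ (A ⊗ C) ⊗ C` (acting on the second factor
through `ψ`). -/
noncomputable def entRAct₂ : (((A ⊗[K] C) ⊗[K] C) ⊗[K] A) →ₗ[K] (A ⊗[K] C) ⊗[K] C :=
  rTensor C (entRAct K A C ψ) ∘ₗ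
    (TensorProduct.assoc K (A ⊗[K] C) A C).symm.toLinearMap ∘ₗ
      lTensor (A ⊗[K] C) ψ ∘ₗ (TensorProduct.assoc K (A ⊗[K] C) C A).toLinearMap

/-!
On a pure tensor `a ⊗ c` the structure maps of `𝒞` only act on `c`, with `a` carried along
as a left factor: `Δ_𝒞 (a ⊗ c) = ((a ⊗ -) ⊗ C) (Δ c)`, `ε_𝒞 (a ⊗ c) = ε c • a` and
`(a ⊗ c)·b = a·ψ(c ⊗ b)`. Coassociativity and counitality of `𝒞` are therefore those of
`C`, right `A`-linearity of `Δ_𝒞` and `ε_𝒞` are the second and fourth entwining axioms,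
and associativity and unitality of the right action are the first and third.
-/

lemma TensorProduct.assoc_symm_tmul_eq_rTensor_mk {R M N P : Type*} [CommSemiring R]
    [AddCommMonoid M] [AddCommMonoid N] [AddCommMonoid P] [Module R M] [Module R N] [Module R P]
    (m : M) (x : N ⊗[R] P) :
    (TensorProduct.assoc R M N P).symm (m ⊗ₜ x) = rTensor P (mk R M N m) x :=
  LinearMap.congr_fun (TensorProduct.ext' fun _ _ => rfl :
    (TensorProduct.assoc R M N P).symm.toLinearMap ∘ₗ mk R M (N ⊗[R] P) m =
      rTensor P (mk R M N m)) x

lemma TensorProduct.assoc_rTensor_rTensor {R M M' N P : Type*} [CommSemiring R]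
    [AddCommMonoid M] [AddCommMonoid M'] [AddCommMonoid N] [AddCommMonoid P] [Module R M]
    [Module R M'] [Module R N] [Module R P] (f : M →ₗ[R] M') (x : (M ⊗[R] N) ⊗[R] P) :
    TensorProduct.assoc R M' N P (rTensor P (rTensor N f) x) =
      rTensor (N ⊗[R] P) f (TensorProduct.assoc R M N P x) := by
  rw [rTensor_tensor]
  simp

lemma TensorProduct.assoc_symm_rTensor {R M M' N P : Type*} [CommSemiring R]
    [AddCommMonoid M] [AddCommMonoid M'] [AddCommMonoid N] [AddCommMonoid P] [Module R M]
    [Module R M'] [Module R N] [Module R P] (f : M →ₗ[R] M') (x : M ⊗[R] (N ⊗[R] P)) :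
    (TensorProduct.assoc R M' N P).symm (rTensor (N ⊗[R] P) f x) =
      rTensor P (rTensor N f) ((TensorProduct.assoc R M N P).symm x) := by
  rw [rTensor_tensor]
  simp

lemma LinearMap.lTensor_rTensor_comm {R M M' N N' : Type*} [CommSemiring R]
    [AddCommMonoid M] [AddCommMonoid M'] [AddCommMonoid N] [AddCommMonoid N'] [Module R M]
    [Module R M'] [Module R N] [Module R N'] (f : M →ₗ[R] M') (g : N →ₗ[R] N')
    (x : M ⊗[R] N) :
    lTensor M' g (rTensor N f x) = rTensor N' f (lTensor M g x) := by
  rw [← comp_apply, lTensor_comp_rTensor, ← rTensor_comp_lTensor, comp_apply]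

section Bimodule

variable {K A C : Type u} [CommRing K] [Ring A] [Algebra K A] [AddCommGroup C] [Module K C]
  {ψ : C ⊗[K] A →ₗ[K] A ⊗[K] C}

@[simp]
lemma entLAct_tmul (a a' : A) (c : C) : entLAct K A C a (a' ⊗ₜ c) = (a * a') ⊗ₜ c := rfl

lemma entLAct_mul (a b : A) :
    entLAct K A C (a * b) = entLAct K A C a ∘ₗ entLAct K A C b := by
  rw [entLAct, entLAct, entLAct, mulLeft_mul, rTensor_comp]

lemma entRAct_tmul_tmul (a b : A) (c : C) :
    entRAct K A C ψ ((a ⊗ₜ c) ⊗ₜ b) = entLAct K A C a (ψ (c ⊗ₜ b)) := by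
  simp only [entRAct, comp_apply, LinearEquiv.coe_coe, TensorProduct.assoc_tmul, lTensor_tmul,
    TensorProduct.assoc_symm_tmul_eq_rTensor_mk, ← rTensor_comp_apply]
  rfl

lemma entRAct_comp_rTensor_mk (a : A) :
    entRAct K A C ψ ∘ₗ rTensor A (mk K A C a) = entLAct K A C a ∘ₗ ψ :=
  TensorProduct.ext' fun c b => entRAct_tmul_tmul a b c

lemma entRAct_entLAct (x : A ⊗[K] C) (a b : A) :
    entRAct K A C ψ (entLAct K A C b x ⊗ₜ a) =
      entLAct K A C b (entRAct K A C ψ (x ⊗ₜ a)) := by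
  induction x using TensorProduct.induction_on with
  | zero => simp
  | tmul a' c => rw [entLAct_tmul, entRAct_tmul_tmul, entRAct_tmul_tmul, entLAct_mul, comp_apply]
  | add u v hu hv => simp only [map_add, add_tmul, hu, hv]

lemma entRAct_entRAct
    (hψ : ∀ c a b, ψ (c ⊗ₜ (a * b)) = entRAct K A C ψ (ψ (c ⊗ₜ a) ⊗ₜ b))
    (x : A ⊗[K] C) (a b : A) :
    entRAct K A C ψ (entRAct K A C ψ (x ⊗ₜ a) ⊗ₜ b) =
      entRAct K A C ψ (x ⊗ₜ (a * b)) := by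
  induction x using TensorProduct.induction_on with
  | zero => simp
  | tmul a' c => rw [entRAct_tmul_tmul, entRAct_tmul_tmul, hψ, entRAct_entLAct]
  | add u v hu hv => simp only [map_add, add_tmul, hu, hv]

lemma entRAct_tmul_one (hψ : ∀ c : C, ψ (c ⊗ₜ 1) = 1 ⊗ₜ c) (x : A ⊗[K] C) :
    entRAct K A C ψ (x ⊗ₜ 1) = x := by
  induction x using TensorProduct.induction_on with
  | zero => simp
  | tmul a c => rw [entRAct_tmul_tmul, hψ, entLAct_tmul, mul_one]
  | add u v hu hv => simp only [map_add, add_tmul, hu, hv]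

end Bimodule

section Coring

variable {K A C ψ}

lemma IsEntwining.map_tmul_mul (hent : IsEntwining K A C ψ) (c : C) (a b : A) :
    ψ (c ⊗ₜ (a * b)) = entRAct K A C ψ (ψ (c ⊗ₜ a) ⊗ₜ b) := by
  simpa [entRAct] using LinearMap.congr_fun hent.1 (c ⊗ₜ (a ⊗ₜ b))

lemma IsEntwining.entComul_map_tmul (hent : IsEntwining K A C ψ) (c : C) (a : A) :
    entComul K A C (ψ (c ⊗ₜ a)) =
      rTensor C ψ ((TensorProduct.assoc K C A C).symm
        (lTensor C ψ (TensorProduct.assoc K C C A (Coalgebra.comul (R := K) c ⊗ₜ a)))) := by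
  rw [entComul, comp_apply, LinearEquiv.coe_coe, LinearEquiv.symm_apply_eq]
  simpa using LinearMap.congr_fun hent.2.1 (c ⊗ₜ a)

lemma IsEntwining.entCounit_map_tmul (hent : IsEntwining K A C ψ) (c : C) (a : A) :
    entCounit K A C (ψ (c ⊗ₜ a)) = Coalgebra.counit (R := K) c • a := by
  simpa [entCounit] using LinearMap.congr_fun hent.2.2.2 (c ⊗ₜ a)

lemma entComul_tmul (a : A) (c : C) :
    entComul K A C (a ⊗ₜ c) = rTensor C (mk K A C a) (Coalgebra.comul (R := K) c) := by
  simp [entComul, TensorProduct.assoc_symm_tmul_eq_rTensor_mk]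

lemma entComul_comp_mk (a : A) :
    entComul K A C ∘ₗ mk K A C a = rTensor C (mk K A C a) ∘ₗ Coalgebra.comul :=
  LinearMap.ext (entComul_tmul a)

lemma entCounit_tmul (a : A) (c : C) :
    entCounit K A C (a ⊗ₜ c) = Coalgebra.counit (R := K) c • a := by
  simp [entCounit]

lemma entCounit_comp_mk (a : A) :
    entCounit K A C ∘ₗ mk K A C a = toSpanSingleton K A a ∘ₗ Coalgebra.counit :=
  LinearMap.ext (entCounit_tmul a)

lemma entComul_comp_rTensor (f : A →ₗ[K] A) :
    entComul K A C ∘ₗ rTensor C f = rTensor C (rTensor C f) ∘ₗ entComul K A C := by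
  refine TensorProduct.ext' fun a c => ?_
  simp only [comp_apply, rTensor_tmul, entComul_tmul, ← rTensor_comp_apply]
  rfl

lemma entCounit_comp_rTensor (f : A →ₗ[K] A) :
    entCounit K A C ∘ₗ rTensor C f = f ∘ₗ entCounit K A C := by
  refine TensorProduct.ext' fun a c => ?_
  simp [entCounit_tmul]

lemma entComul_entLAct (a : A) (x : A ⊗[K] C) :
    entComul K A C (entLAct K A C a x) = rTensor C (entLAct K A C a) (entComul K A C x) :=
  LinearMap.congr_fun (entComul_comp_rTensor (mulLeft K a)) x

lemma entCounit_entLAct (a : A) (x : A ⊗[K] C) :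
    entCounit K A C (entLAct K A C a x) = a * entCounit K A C x :=
  LinearMap.congr_fun (entCounit_comp_rTensor (mulLeft K a)) x

lemma entComul_coassoc :
    rTensor C (entComul K A C) ∘ₗ entComul K A C =
      (TensorProduct.assoc K (A ⊗[K] C) C C).symm.toLinearMap ∘ₗ
        lTensor (A ⊗[K] C) Coalgebra.comul ∘ₗ entComul K A C := by
  refine TensorProduct.ext' fun a c => ?_
  simp only [comp_apply, LinearEquiv.coe_coe, entComul_tmul]
  rw [← rTensor_comp_apply, entComul_comp_mk, rTensor_comp_apply, lTensor_rTensor_comm,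
    ← Coalgebra.coassoc_apply, TensorProduct.assoc_symm_rTensor, LinearEquiv.symm_apply_apply]

lemma rTensor_entCounit_comp_entComul :
    rTensor C (entCounit K A C) ∘ₗ entComul K A C = LinearMap.id := by
  refine TensorProduct.ext' fun a c => ?_
  simp only [comp_apply, entComul_tmul, id_apply]
  rw [← rTensor_comp_apply, entCounit_comp_mk, rTensor_comp_apply,
    Coalgebra.rTensor_counit_comul, rTensor_tmul, toSpanSingleton_apply, one_smul]

lemma IsEntwining.entComul_comp_entRAct (hent : IsEntwining K A C ψ) :
    entComul K A C ∘ₗ entRAct K A C ψ =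
      entRAct₂ K A C ψ ∘ₗ rTensor A (entComul K A C) := by
  refine TensorProduct.ext_threefold fun a c b => ?_
  simp only [comp_apply, rTensor_tmul, entRAct_tmul_tmul, entComul_tmul, entRAct₂,
    LinearEquiv.coe_coe]
  rw [entComul_entLAct, hent.entComul_map_tmul, ← rTensor_comp_apply,
    ← rTensor_tmul A (rTensor C (mk K A C a)), TensorProduct.assoc_rTensor_rTensor,
    lTensor_rTensor_comm, TensorProduct.assoc_symm_rTensor, ← rTensor_comp_apply,
    entRAct_comp_rTensor_mk]

lemma IsEntwining.entCounit_comp_entRAct (hent : IsEntwining K A C ψ) :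
    entCounit K A C ∘ₗ entRAct K A C ψ = mul' K A ∘ₗ rTensor A (entCounit K A C) := by
  refine TensorProduct.ext_threefold fun a c b => ?_
  simp only [comp_apply, rTensor_tmul, entRAct_tmul_tmul, entCounit_tmul, mul'_apply]
  rw [entCounit_entLAct, hent.entCounit_map_tmul, mul_smul_comm, smul_mul_assoc]

lemma IsEntwining.entRAct_comp_lTensor_entCounit_comp_entComul (hent : IsEntwining K A C ψ) :
    entRAct K A C ψ ∘ₗ
        lTensor (A ⊗[K] C) (entCounit K A C ∘ₗ (TensorProduct.mk K A C) 1) ∘ₗ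
          entComul K A C = LinearMap.id := by
  refine TensorProduct.ext' fun a c => ?_
  simp only [comp_apply, entComul_tmul, id_apply]
  rw [lTensor_rTensor_comm, ← comp_apply (entRAct K A C ψ), entRAct_comp_rTensor_mk, comp_apply,
    entCounit_comp_mk, lTensor_comp_apply, Coalgebra.lTensor_counit_comul,
    lTensor_tmul, toSpanSingleton_apply, one_smul, hent.2.2.1, entLAct_tmul, mul_one]

end Coring

theorem stmt18 (hent : IsEntwining K A C ψ) :
    -- `𝒞 = A ⊗ C` is an `A`-bimodule:
    (∀ (x : A ⊗[K] C) (a b : A),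
        entRAct K A C ψ ((entRAct K A C ψ (x ⊗ₜ a)) ⊗ₜ b) =
          entRAct K A C ψ (x ⊗ₜ (a * b))) ∧
    (∀ x : A ⊗[K] C, entRAct K A C ψ (x ⊗ₜ (1 : A)) = x) ∧
    (∀ (x : A ⊗[K] C) (a b : A),
        entRAct K A C ψ ((entLAct K A C b x) ⊗ₜ a) =
          entLAct K A C b (entRAct K A C ψ (x ⊗ₜ a))) ∧
    -- the comultiplication is left `A`-linear ...
    (∀ (a : A) (x : A ⊗[K] C),
        entComul K A C (entLAct K A C a x) =
          rTensor C (entLAct K A C a) (entComul K A C x)) ∧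
    -- ... and right `A`-linear:
    (entComul K A C ∘ₗ entRAct K A C ψ =
      entRAct₂ K A C ψ ∘ₗ rTensor A (entComul K A C)) ∧
    -- the comultiplication is coassociative:
    (rTensor C (entComul K A C) ∘ₗ entComul K A C =
      (TensorProduct.assoc K (A ⊗[K] C) C C).symm.toLinearMap ∘ₗ
        lTensor (A ⊗[K] C) Coalgebra.comul ∘ₗ entComul K A C) ∧
    -- the counit is left `A`-linear ...
    (∀ (a : A) (x : A ⊗[K] C),
        entCounit K A C (entLAct K A C a x) = a * entCounit K A C x) ∧
    -- ... and right `A`-linear: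
    (entCounit K A C ∘ₗ entRAct K A C ψ = mul' K A ∘ₗ rTensor A (entCounit K A C)) ∧
    -- the counit laws `(ε ⊗ 𝒞) ∘ Δ = id = (𝒞 ⊗ ε) ∘ Δ`:
    (rTensor C (entCounit K A C) ∘ₗ entComul K A C = LinearMap.id) ∧
    (entRAct K A C ψ ∘ₗ
        lTensor (A ⊗[K] C) (entCounit K A C ∘ₗ (TensorProduct.mk K A C) 1) ∘ₗ
          entComul K A C = LinearMap.id) :=
  ⟨entRAct_entRAct hent.map_tmul_mul, entRAct_tmul_one hent.2.2.1, entRAct_entLAct,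
    entComul_entLAct, hent.entComul_comp_entRAct, entComul_coassoc, entCounit_entLAct,
    hent.entCounit_comp_entRAct, rTensor_entCounit_comp_entComul,
    hent.entRAct_comp_lTensor_entCounit_comp_entComul⟩
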